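/- Let U be Uniform(0,1) and, conditional on U = t, let Y_{n-m} be Binomial(n-m, 1-t²). Suppose n → ∞, m → ∞ with n/(n-m) → c for some c > 1. Then E[(n-m)/(m + Y_{n-m})] converges to ∫₀¹ dt/(c - t²) = coth⁻¹(√c)/√c. -/

import Mathlib

/-!
Write `N = n - m`, `M = m`, `a = M / N` and `h_a(s) = (a + s)⁻¹` on `[0, 1]`. Then
`N / (M + k) = h_a(k / N)`, so averaging over the binomial law of `Y` given `U = x` turns
`E[N / (M + Y) | U = x]` into the Bernstein polynomial `B_N h_a` evaluated at `1 - x²`.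
Since `a → c - 1`, `N → ∞` and `B_N` is a contraction for the sup norm,
`B_N h_a → h_{c-1}` uniformly, and `h_{c-1}(1 - x²) = 1 / (c - x²)`. The closed form comes from
the antiderivative `(log (√c + x) - log (√c - x)) / (2√c)`.
-/

open MeasureTheory Filter Finset Topology
open scoped unitInterval

section Bernstein

variable {E : Type*} [NormedAddCommGroup E] [NormedSpace ℝ E]

theorem bernsteinApproximation_sub (n : ℕ) (f g : C(I, E)) :
    bernsteinApproximation n (f - g) = bernsteinApproximation n f - bernsteinApproximation n g := by
  ext x
  simp [bernsteinApproximation.apply, smul_sub]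

theorem norm_bernsteinApproximation_le (n : ℕ) (f : C(I, E)) :
    ‖bernsteinApproximation n f‖ ≤ ‖f‖ := by
  refine (ContinuousMap.norm_le _ (norm_nonneg f)).2 fun x => ?_
  calc ‖bernsteinApproximation n f x‖
      ≤ ∑ k : Fin (n + 1), bernstein n k x * ‖f (bernstein.z k)‖ := by
        rw [bernsteinApproximation.apply]
        refine (norm_sum_le _ _).trans_eq (sum_congr rfl fun k _ => ?_)
        rw [norm_smul, Real.norm_of_nonneg bernstein_nonneg]
    _ ≤ ∑ k : Fin (n + 1), bernstein n k x * ‖f‖ :=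
        sum_le_sum fun k _ => mul_le_mul_of_nonneg_left (f.norm_coe_le_norm _) bernstein_nonneg
    _ = ‖f‖ := by rw [← sum_mul, bernstein.probability, one_mul]

theorem tendsto_bernsteinApproximation_of_tendsto {ι : Type*} {l : Filter ι} {N : ι → ℕ}
    {f : ι → C(I, E)} {g : C(I, E)} (hN : Tendsto N l atTop) (hf : Tendsto f l (𝓝 g)) :
    Tendsto (fun i => bernsteinApproximation (N i) (f i)) l (𝓝 g) := by
  rw [tendsto_iff_norm_sub_tendsto_zero] at hf ⊢
  have hB := tendsto_iff_norm_sub_tendsto_zero.1 ((bernsteinApproximation_uniform g).comp hN)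
  refine squeeze_zero (fun _ => norm_nonneg _) (fun i => ?_)
    (zero_add (0 : ℝ) ▸ hf.add hB)
  calc ‖bernsteinApproximation (N i) (f i) - g‖
      ≤ ‖bernsteinApproximation (N i) (f i - g)‖ +
          ‖bernsteinApproximation (N i) g - g‖ := by
        rw [bernsteinApproximation_sub]
        exact norm_sub_le_norm_sub_add_norm_sub _ (bernsteinApproximation (N i) g) _
    _ ≤ ‖f i - g‖ + ‖bernsteinApproximation (N i) g - g‖ :=
        add_le_add_left (norm_bernsteinApproximation_le _ _) _

end Bernstein

theorem tendsto_integral_comp_of_tendsto {α ι : Type*} [MeasurableSpace α] {ν : Measure α}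
    [IsFiniteMeasure ν] {l : Filter ι} [l.IsCountablyGenerated] {u : α → I} (hu : Measurable u)
    {φ : ι → C(I, ℝ)} {ψ : C(I, ℝ)} (hφ : Tendsto φ l (𝓝 ψ)) :
    Tendsto (fun i => ∫ x, φ i (u x) ∂ν) l (𝓝 (∫ x, ψ (u x) ∂ν)) := by
  refine tendsto_integral_filter_of_dominated_convergence (fun _ => ‖ψ‖ + 1)
    (Eventually.of_forall fun i => ((φ i).continuous.measurable.comp hu).aestronglyMeasurable)
    ?_ (integrable_const _) (ae_of_all _ fun x => ((continuous_eval_const _).tendsto ψ).comp hφ)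
  filter_upwards [hφ.norm.eventually (gt_mem_nhds (lt_add_one ‖ψ‖))] with i hi
  exact ae_of_all _ fun x => ((φ i).norm_coe_le_norm _).trans hi.le

/-- `a ↦ (t ↦ (a + t)⁻¹)`, continuous into `C(I, ℝ)` with its uniform topology: this is
what lets `a` move along the sequence. -/
noncomputable def invAdd : C(Set.Ioi (0 : ℝ), C(I, ℝ)) :=
  ContinuousMap.curry ⟨fun p => ((p.1 : ℝ) + p.2)⁻¹,
    (by fun_prop : Continuous fun p : Set.Ioi (0 : ℝ) × I => (p.1 : ℝ) + p.2).inv₀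
      fun p => (add_pos_of_pos_of_nonneg p.1.2 p.2.2.1).ne'⟩

theorem invAdd_apply (a : Set.Ioi (0 : ℝ)) (t : I) : invAdd a t = ((a : ℝ) + t)⁻¹ := rfl

theorem integral_comp_eq_sum_measureReal {Ω : Type*} [MeasurableSpace Ω] (μ : Measure Ω)
    [IsFiniteMeasure μ] {Y : Ω → ℕ} (hY : Measurable Y) {N : ℕ} (hYle : ∀ ω, Y ω ≤ N)
    (g : ℕ → ℝ) :
    ∫ ω, g (Y ω) ∂μ = ∑ k ∈ range (N + 1), μ.real (Y ⁻¹' {k}) * g k := by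
  have hg : ∀ ω,
      g (Y ω) = ∑ k ∈ range (N + 1), (Y ⁻¹' {k}).indicator (fun _ => g k) ω := by
    intro ω
    rw [sum_eq_single_of_mem (Y ω) (mem_range.2 (Nat.lt_succ_of_le (hYle ω)))]
    · simp
    · exact fun k _ hk => Set.indicator_of_notMem (Ne.symm hk) _
  simp_rw [hg]
  rw [integral_finsetSum _ fun k _ =>
    (integrable_const _).indicator (hY (measurableSet_singleton k))]
  exact sum_congr rfl fun k _ => integral_indicator_const _ (hY (measurableSet_singleton k))

theorem integral_comp_eq_integral_sum_of_measureReal_eq {Ω α : Type*} [MeasurableSpace Ω]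
    [MeasurableSpace α] (μ : Measure Ω) [IsFiniteMeasure μ] (ν : Measure α) {Y : Ω → ℕ}
    (hY : Measurable Y) {N : ℕ} (hYle : ∀ ω, Y ω ≤ N) {p : ℕ → α → ℝ}
    (hp : ∀ k, Integrable (p k) ν)
    (hlaw : ∀ k ≤ N, μ.real (Y ⁻¹' {k}) = ∫ x, p k x ∂ν)
    (g : ℕ → ℝ) :
    ∫ ω, g (Y ω) ∂μ = ∫ x, ∑ k ∈ range (N + 1), g k * p k x ∂ν := by
  rw [integral_comp_eq_sum_measureReal μ hY hYle,
    integral_finsetSum _ fun k _ => (hp k).const_mul _]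
  refine sum_congr rfl fun k hk => ?_
  rw [hlaw k (Nat.lt_succ_iff.1 (mem_range.1 hk)), integral_const_mul, mul_comm]

theorem bernsteinApproximation_invAdd_apply {N M : ℕ} (hN : 0 < N) (hM : 0 < M) (t : I) :
    bernsteinApproximation N (invAdd ⟨(M : ℝ) / N, Set.mem_Ioi.2 (by positivity)⟩) t =
      ∑ k ∈ range (N + 1),
        (N : ℝ) / (M + k) * (N.choose k * (t : ℝ) ^ k * (1 - t) ^ (N - k)) := by
  rw [bernsteinApproximation.apply, ← Fin.sum_univ_eq_sum_range]
  refine sum_congr rfl fun k _ => ?_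
  rw [bernstein_apply, invAdd_apply, smul_eq_mul, mul_comm]
  congr 1
  simp only [bernstein.z]
  field_simp

noncomputable def oneSubSq (x : ℝ) : I := Set.projIcc 0 1 zero_le_one (1 - x ^ 2)

theorem measurable_oneSubSq : Measurable oneSubSq :=
  (continuous_projIcc.comp (by fun_prop)).measurable

theorem coe_oneSubSq {x : ℝ} (hx : x ∈ Set.Ioo 0 1) : (oneSubSq x : ℝ) = 1 - x ^ 2 := by
  rw [oneSubSq, Set.projIcc_of_mem]
  constructor <;> nlinarith [hx.1, hx.2]

theorem integral_div_add_eq_setIntegral_bernsteinApproximation {Ω : Type*} [MeasurableSpace Ω]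
    (μ : Measure Ω) [IsFiniteMeasure μ] {N M : ℕ} (hN : 0 < N) (hM : 0 < M) {Y : Ω → ℕ}
    (hY : Measurable Y) (hYle : ∀ ω, Y ω ≤ N)
    (hlaw : ∀ k ≤ N, μ.real (Y ⁻¹' {k}) =
      ∫ x in Set.Ioo 0 1, (N.choose k : ℝ) * (1 - x ^ 2) ^ k * (x ^ 2) ^ (N - k)) :
    ∫ ω, (N : ℝ) / (M + Y ω) ∂μ = ∫ x in Set.Ioo 0 1,
      bernsteinApproximation N (invAdd ⟨(M : ℝ) / N, Set.mem_Ioi.2 (by positivity)⟩)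
        (oneSubSq x) := by
  have hp : ∀ k, IntegrableOn
      (fun x : ℝ => (N.choose k : ℝ) * (1 - x ^ 2) ^ k * (x ^ 2) ^ (N - k)) (Set.Ioo 0 1) :=
    fun k =>
    (Continuous.integrableOn_Icc (by fun_prop)).mono_set Set.Ioo_subset_Icc_self
  rw [integral_comp_eq_integral_sum_of_measureReal_eq μ _ hY hYle hp hlaw
    fun k => (N : ℝ) / (M + k)]
  refine setIntegral_congr_fun measurableSet_Ioo fun x hx => ?_
  rw [bernsteinApproximation_invAdd_apply hN hM, coe_oneSubSq hx, sub_sub_cancel]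

theorem integral_Ioo_one_div_sub_sq {c : ℝ} (hc : 1 < c) :
    ∫ x in Set.Ioo (0 : ℝ) 1, 1 / (c - x ^ 2) =
      Real.log ((Real.sqrt c + 1) / (Real.sqrt c - 1)) / (2 * Real.sqrt c) := by
  set s := Real.sqrt c
  have hs : 1 < s := Real.lt_sqrt zero_le_one |>.2 (by simpa using hc)
  have hc_eq : c = s ^ 2 := (Real.sq_sqrt (by linarith)).symm
  have hderiv : ∀ x ∈ Set.uIcc (0 : ℝ) 1,
      HasDerivAt (fun x => (Real.log (s + x) - Real.log (s - x)) / (2 * s))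
        (1 / (c - x ^ 2)) x := by
    intro x hx
    rw [Set.uIcc_of_le zero_le_one] at hx
    have h₁ : s + x ≠ 0 := by linarith [hx.1]
    have h₂ : s - x ≠ 0 := by linarith [hx.2]
    refine ((((hasDerivAt_id' x).const_add s).log h₁).sub
      (((hasDerivAt_id' x).const_sub s).log h₂)).div_const (2 * s) |>.congr_deriv ?_
    rw [show c - x ^ 2 = (s + x) * (s - x) by rw [hc_eq]; ring]
    field_simp
    ring
  have hcont : ContinuousOn (fun x : ℝ => 1 / (c - x ^ 2)) (Set.uIcc 0 1) := by
    refine continuousOn_const.div (by fun_prop) fun x hx => ?_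
    rw [Set.uIcc_of_le zero_le_one] at hx
    nlinarith [hx.1, hx.2]
  rw [← integral_Ioc_eq_integral_Ioo, ← intervalIntegral.integral_of_le zero_le_one,
    intervalIntegral.integral_eq_sub_of_hasDerivAt hderiv hcont.intervalIntegrable,
    Real.log_div (by linarith) (by linarith)]
  simp

section Ratios

variable {ι : Type*} {l : Filter ι} {n m : ι → ℕ} {c : ℝ}

theorem tendsto_div_natSub_of_tendsto (hmn : ∀ j, m j < n j)
    (hratio : Tendsto (fun j => (n j : ℝ) / ((n j : ℝ) - (m j : ℝ))) l (𝓝 c)) :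
    Tendsto (fun j => (m j : ℝ) / (n j - m j : ℕ)) l (𝓝 (c - 1)) := by
  refine (hratio.sub_const 1).congr fun j => ?_
  have : (n j : ℝ) - m j ≠ 0 := sub_ne_zero.2 (Nat.cast_lt.2 (hmn j)).ne'
  rw [Nat.cast_sub (hmn j).le]
  field_simp
  ring

theorem tendsto_natSub_atTop_of_tendsto (hmn : ∀ j, m j < n j) (hc : 0 < c)
    (hn : Tendsto n l atTop)
    (hratio : Tendsto (fun j => (n j : ℝ) / ((n j : ℝ) - (m j : ℝ))) l (𝓝 c)) :
    Tendsto (fun j => n j - m j) l atTop := by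
  rw [← tendsto_natCast_atTop_iff (R := ℝ)]
  refine ((tendsto_natCast_atTop_iff.2 hn).atTop_mul_pos (inv_pos.2 hc)
    (hratio.inv₀ hc.ne')).congr fun j => ?_
  have : (n j : ℝ) ≠ 0 := Nat.cast_ne_zero.2 (Nat.zero_lt_of_lt (hmn j)).ne'
  rw [inv_div, Nat.cast_sub (hmn j).le]
  field_simp

end Ratios

theorem stmt13_general {Ω : Type*} [MeasureSpace Ω] (μ : Measure Ω) [IsProbabilityMeasure μ]
    (n m : ℕ → ℕ) (hnm : ∀ j, 2 ≤ m j ∧ m j < n j)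
    (hn : Tendsto n atTop atTop)
    (c : ℝ) (hc : 1 < c)
    (hratio : Tendsto (fun j => (n j : ℝ) / ((n j : ℝ) - (m j : ℝ))) atTop (nhds c))
    (U : Ω → ℝ)
    (Y : ℕ → Ω → ℕ) (hY : ∀ j, Measurable (Y j)) (hYle : ∀ j ω, Y j ω ≤ n j - m j)
    (hlaw : ∀ j k, k ≤ n j - m j → ∀ s : Set ℝ, MeasurableSet s →
      (μ {ω | U ω ∈ s ∧ Y j ω = k}).toReal =
        ∫ x in s ∩ Set.Ioo 0 1,
          ((n j - m j).choose k : ℝ) * (1 - x ^ 2) ^ k * (x ^ 2) ^ (n j - m j - k)) :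
    Tendsto (fun j => ∫ ω, ((n j : ℝ) - (m j : ℝ)) / ((m j : ℝ) + (Y j ω : ℝ)) ∂μ) atTop
        (nhds (∫ x in Set.Ioo (0 : ℝ) 1, 1 / (c - x ^ 2))) ∧
      ∫ x in Set.Ioo (0 : ℝ) 1, 1 / (c - x ^ 2) =
        Real.log ((Real.sqrt c + 1) / (Real.sqrt c - 1)) / (2 * Real.sqrt c) := by
  refine ⟨?_, integral_Ioo_one_div_sub_sq hc⟩
  have hmn : ∀ j, m j < n j := fun j => (hnm j).2
  have hN : ∀ j, 0 < n j - m j := fun j => Nat.sub_pos_of_lt (hmn j)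
  have hM : ∀ j, 0 < m j := fun j => zero_lt_two.trans_le (hnm j).1
  have ha_pos : ∀ j, (m j : ℝ) / (n j - m j : ℕ) ∈ Set.Ioi 0 := fun j =>
    Set.mem_Ioi.2 (div_pos (Nat.cast_pos.2 (hM j)) (Nat.cast_pos.2 (hN j)))
  have hE : ∀ j, ∫ ω, ((n j : ℝ) - m j) / (m j + Y j ω) ∂μ = ∫ x in Set.Ioo 0 1,
      bernsteinApproximation (n j - m j) (invAdd ⟨_, ha_pos j⟩) (oneSubSq x) := fun j => by
    rw [← Nat.cast_sub (hmn j).le]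
    refine integral_div_add_eq_setIntegral_bernsteinApproximation μ (hN j) (hM j) (hY j)
      (hYle j) fun k hk => ?_
    simpa [measureReal_def, Set.preimage] using hlaw j k hk Set.univ MeasurableSet.univ
  have hlim : ∫ x in Set.Ioo (0 : ℝ) 1, 1 / (c - x ^ 2) =
      ∫ x in Set.Ioo 0 1, invAdd ⟨c - 1, Set.mem_Ioi.2 (by linarith)⟩ (oneSubSq x) :=
    setIntegral_congr_fun measurableSet_Ioo fun x hx => by
      rw [invAdd_apply, coe_oneSubSq hx, one_div]
      ring
  simp_rw [hE, hlim]
  exact tendsto_integral_comp_of_tendsto measurable_oneSubSq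
    (tendsto_bernsteinApproximation_of_tendsto
      (tendsto_natSub_atTop_of_tendsto hmn (by linarith) hn hratio)
      ((invAdd.continuous.tendsto _).comp
        (tendsto_subtype_rng.2 (tendsto_div_natSub_of_tendsto hmn hratio))))

/-- Let `U` be Uniform(0,1) and, conditional on `U = t`, let `Y_j` be
Binomial(n_j - m_j, 1 - t²) (this joint law is expressed by `hlaw`).  If
`n_j, m_j → ∞` with `n_j/(n_j - m_j) → c > 1`, then
`E[(n_j - m_j)/(m_j + Y_j)] → ∫₀¹ dt/(c - t²) = coth⁻¹(√c)/√c`. -/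
theorem stmt13 {Ω : Type*} [MeasureSpace Ω] (μ : Measure Ω) [IsProbabilityMeasure μ]
    (n m : ℕ → ℕ) (hnm : ∀ j, 2 ≤ m j ∧ m j < n j)
    (hm : Tendsto m atTop atTop) (hn : Tendsto n atTop atTop)
    (c : ℝ) (hc : 1 < c)
    (hratio : Tendsto (fun j => (n j : ℝ) / ((n j : ℝ) - (m j : ℝ))) atTop (nhds c))
    (U : Ω → ℝ) (hU : Measurable U)
    (hUunif : Measure.map U μ = (volume : Measure ℝ).restrict (Set.Ioo 0 1))
    (Y : ℕ → Ω → ℕ) (hY : ∀ j, Measurable (Y j)) (hYle : ∀ j ω, Y j ω ≤ n j - m j)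
    (hlaw : ∀ j k, k ≤ n j - m j → ∀ s : Set ℝ, MeasurableSet s →
      (μ {ω | U ω ∈ s ∧ Y j ω = k}).toReal =
        ∫ x in s ∩ Set.Ioo 0 1,
          ((n j - m j).choose k : ℝ) * (1 - x ^ 2) ^ k * (x ^ 2) ^ (n j - m j - k)) :
    Tendsto (fun j => ∫ ω, ((n j : ℝ) - (m j : ℝ)) / ((m j : ℝ) + (Y j ω : ℝ)) ∂μ) atTop
        (nhds (∫ x in Set.Ioo (0 : ℝ) 1, 1 / (c - x ^ 2))) ∧
      ∫ x in Set.Ioo (0 : ℝ) 1, 1 / (c - x ^ 2) =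
        Real.log ((Real.sqrt c + 1) / (Real.sqrt c - 1)) / (2 * Real.sqrt c) :=
  stmt13_general μ n m hnm hn c hc hratio U Y hY hYle hlaw
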